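/- For n ≥ 2 and any r, the number of nested canalizing functions f : 𝔽₂ⁿ → 𝔽₂ (in n essential variables) with layer number r is |NCF(n,r)| = 2^{n+1} · Σ n!/(k₁!·k₂!⋯k_r!), where the sum is over all tuples (k₁,…,k_r) of positive integers with k₁ + ⋯ + k_r = n and k_r ≥ 2. -/

import Mathlib

/-!
The layered form is determined by `f`. On the subcube where every variable of the first `i`
layers takes its non-canalizing value `a u + 1`, the nest is `i` plus the nest of the remaining
layers; so for a remaining variable `j`, the condition `x j = c` forces the value of `f` on this
subcube exactly when `j` lies in layer `i` and `c = a j`, and the forced value is `b + i`.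
Reading this off for `i = 0, 1, …` recovers `b`, the layers and `a` from `f`. So `NCF(n, r)` is
in bijection with the admissible triples `(L, a, b)`: `2ⁿ · 2` choices of `(a, b)` and, for each
vector `k` of layer sizes, `n! / ∏ kᵢ!` layer assignments `L`, counted as a coefficient of
`(X₁ + ⋯ + X_r)ⁿ`.
-/

/-- `f` is nested canalizing in the variable order `σ(0), σ(1), …, σ(n-1)`
with canalizing input values `a` and canalized output values `b`:
`f x = b k` whenever `x (σ j) = a j + 1` for all `j < k` and `x (σ k) = a k`,
and `f x = b (last) + 1` whenever `x (σ j) = a j + 1` for all `j`. -/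
def IsNCF {n : ℕ} (f : (Fin n → ZMod 2) → ZMod 2) (σ : Equiv.Perm (Fin n))
    (a b : Fin n → ZMod 2) : Prop :=
  (∀ (k : Fin n) (x : Fin n → ZMod 2),
      (∀ j : Fin n, j < k → x (σ j) = a j + 1) → x (σ k) = a k → f x = b k) ∧
  (∀ k : Fin n, (∀ j : Fin n, j ≤ k) →
      ∀ x : Fin n → ZMod 2, (∀ j : Fin n, x (σ j) = a j + 1) → f x = b k + 1)

/-- The nested expression `M i * (M (i+1) * ( … * (M (i+t-1) + 1) … ) + 1)`
with `t` factors, i.e. `nestVal M t i = Mᵢ(M_{i+1}(⋯(M_{i+t-1} ⊕ 1)⋯) ⊕ 1)`. -/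
def nestVal (M : ℕ → ZMod 2) : ℕ → ℕ → ZMod 2
  | 0, _ => 0
  | 1, i => M i
  | (t + 2), i => M i * (nestVal M (t + 1) (i + 1) + 1)

/-- The extended monomial of the `i`-th layer, given the layer assignment `L`
and the complemented inputs `a`:  `Mᵢ(x) = ∏_{L j = i} (x j ⊕ a j)`. -/
def layerMon {n r : ℕ} (L : Fin n → Fin r) (a : Fin n → ZMod 2) (i : ℕ)
    (x : Fin n → ZMod 2) : ZMod 2 :=
  ∏ j ∈ Finset.univ.filter (fun j : Fin n => (L j : ℕ) = i), (x j + a j)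

/-- `kᵢ`, the number of variables in the `i`-th layer. -/
def layerSize {n r : ℕ} (L : Fin n → Fin r) (i : ℕ) : ℕ :=
  (Finset.univ.filter (fun j : Fin n => (L j : ℕ) = i)).card

/-- `K_l = k₀ + k₁ + ⋯ + k_{l-1}`, the number of variables in the first `l` layers. -/
def layerSum {n r : ℕ} (L : Fin n → Fin r) (l : ℕ) : ℕ :=
  ∑ i ∈ Finset.range l, layerSize L i

/-- `f` is given in the layered form
`f = M₁(M₂(⋯(M_{r−1}(M_r ⊕ 1) ⊕ 1)⋯) ⊕ 1) ⊕ b`, where the `Mᵢ` are extended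
monomials in pairwise disjoint sets of variables comprising all `n` variables
(the variable set of `Mᵢ` being the `i`-th layer `{j | L j = i}`), every layer
is nonempty, and the last layer has at least two variables. -/
def IsLayeredForm {n r : ℕ} (f : (Fin n → ZMod 2) → ZMod 2)
    (L : Fin n → Fin r) (a : Fin n → ZMod 2) (b : ZMod 2) : Prop :=
  1 ≤ r ∧
  (∀ i : Fin r, 1 ≤ layerSize L (i : ℕ)) ∧
  2 ≤ layerSize L (r - 1) ∧
  ∀ x : Fin n → ZMod 2, f x = nestVal (fun i => layerMon L a i x) r 0 + b

open Finset

lemma zmod_two_eq_add_one_of_ne {x y : ZMod 2} (h : x ≠ y) : x = y + 1 := by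
  revert x y; decide

section Multinomial

open MvPolynomial

/-- Compare coefficients of `∏ i, X i ^ k i` in `(∑ i, X i) ^ |α| = ∏ j : α, ∑ i, X i`. -/
theorem card_filter_card_fiber_eq_multinomial {α ι : Type*} [Fintype α] [DecidableEq α]
    [Fintype ι] [DecidableEq ι] (k : ι → ℕ) (hk : ∑ i, k i = Fintype.card α) :
    #{L : α → ι | ∀ i, #{j | L j = i} = k i} = Nat.multinomial univ k := by
  set d : ι →₀ ℕ := Finsupp.equivFunOnFinite.symm k
  have hd : ⇑d = k := Finsupp.coe_equivFunOnFinite_symm k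
  have hexpand : (∑ i, X i : MvPolynomial ι ℕ) ^ Fintype.card α =
      ∑ L : α → ι, monomial (∑ j, Finsupp.single (L j) 1) 1 := by
    rw [← card_univ, ← prod_const, Fintype.prod_sum]
    simp only [monomial_sum_one]
    rfl
  have hcoeff := coeff_sum_X_pow_of_fintype (R := ℕ) d (Fintype.card α)
  rw [hexpand, Finsupp.sum_fintype _ _ fun _ => rfl, if_pos (by rwa [hd]),
    Finsupp.multinomial_eq_of_support_subset (subset_univ _), coeff_sum, hd] at hcoeff
  simp only [coeff_monomial, sum_boole, Nat.cast_id] at hcoeff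
  rw [← hcoeff]
  congr 1
  ext L
  simp [d, Finsupp.ext_iff, Finsupp.finsetSum_apply, Finsupp.single_apply]

end Multinomial

lemma nestVal_succ (M : ℕ → ZMod 2) (t s : ℕ) :
    nestVal M (t + 1) s = M s * (nestVal M t (s + 1) + 1) := by
  cases t <;> simp [nestVal]

lemma nestVal_eq_of_leading_ones {M : ℕ → ZMod 2} {m r s : ℕ} (hmr : m ≤ r)
    (hone : ∀ i < m, M (s + i) = 1) (hzero : m < r → M (s + m) = 0) :
    nestVal M r s = m := by
  induction m generalizing r s with
  | zero =>
    cases r with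
    | zero => rfl
    | succ t =>
      rw [nestVal_succ, show M s = 0 from hzero (Nat.succ_pos t), zero_mul, Nat.cast_zero]
  | succ m ih =>
    obtain ⟨t, rfl⟩ : ∃ t, r = t + 1 := ⟨r - 1, by omega⟩
    have hs : M s = 1 := by simpa using hone 0 (Nat.succ_pos m)
    have hrest : nestVal M t (s + 1) = m :=
      ih (by omega) (fun i hi => by rw [Nat.add_right_comm]; exact hone (i + 1) (by omega))
        (fun h => by rw [Nat.add_right_comm]; exact hzero (by omega))
    rw [nestVal_succ, hs, hrest, one_mul, Nat.cast_succ]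

section Layers

variable {n r : ℕ}

def IsLayerAssignment (L : Fin n → Fin r) : Prop :=
  (∀ i : Fin r, 1 ≤ layerSize L i) ∧ 2 ≤ layerSize L (r - 1)

instance : DecidablePred (IsLayerAssignment (n := n) (r := r)) :=
  fun _ => inferInstanceAs (Decidable (_ ∧ _))

def PassesLayersBelow (L : Fin n → Fin r) (a : Fin n → ZMod 2) (m : ℕ)
    (x : Fin n → ZMod 2) : Prop :=
  ∀ u, (L u : ℕ) < m → x u = a u + 1

def layeredFn (L : Fin n → Fin r) (a : Fin n → ZMod 2) (b : ZMod 2)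
    (x : Fin n → ZMod 2) : ZMod 2 :=
  nestVal (fun i => layerMon L a i x) r 0 + b

lemma layerSize_coe (L : Fin n → Fin r) (i : Fin r) :
    layerSize L i = #{j | L j = i} := by
  simp only [layerSize, Fin.val_inj]

lemma IsLayerAssignment.exists_mem {L : Fin n → Fin r} (hL : IsLayerAssignment L) {i : ℕ}
    (hi : i < r) : ∃ u, (L u : ℕ) = i := by
  obtain ⟨u, hu⟩ := card_pos.mp (hL.1 ⟨i, hi⟩)
  exact ⟨u, (mem_filter.mp hu).2⟩

lemma IsLayerAssignment.ne_last_of_subsingleton {L : Fin n → Fin r} (hL : IsLayerAssignment L)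
    {i : ℕ} {j : Fin n} (hsub : ∀ u, (L u : ℕ) = i → u = j) : i ≠ r - 1 := by
  rintro rfl
  have : layerSize L (r - 1) ≤ 1 :=
    card_le_one.mpr fun u hu v hv => by
      rw [hsub u (mem_filter.mp hu).2, hsub v (mem_filter.mp hv).2]
  exact absurd hL.2 (by omega)

lemma layerMon_eq_one {L : Fin n → Fin r} {a x : Fin n → ZMod 2} {i : ℕ}
    (h : ∀ u, (L u : ℕ) = i → x u = a u + 1) : layerMon L a i x = 1 :=
  prod_eq_one fun u hu => by rw [h u (mem_filter.mp hu).2]; grind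

lemma layerMon_eq_zero {L : Fin n → Fin r} {a x : Fin n → ZMod 2} {i : ℕ} {u : Fin n}
    (hu : (L u : ℕ) = i) (hx : x u = a u) : layerMon L a i x = 0 :=
  prod_eq_zero (mem_filter.mpr ⟨mem_univ u, hu⟩) (by rw [hx]; grind)

lemma nestVal_layerMon_eq {L : Fin n → Fin r} {a x : Fin n → ZMod 2} {m : ℕ} (hmr : m ≤ r)
    (hx : PassesLayersBelow L a m x) (hblock : m < r → ∃ u, (L u : ℕ) = m ∧ x u = a u) :
    nestVal (fun i => layerMon L a i x) r 0 = m :=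
  nestVal_eq_of_leading_ones hmr
    (fun i hi => layerMon_eq_one fun u hu => hx u (by omega))
    (fun h => let ⟨_, hu, hxu⟩ := hblock h; layerMon_eq_zero (by omega) hxu)

/-- The witness passes every layer below `m`, blocks at every later variable, and has
`x j = c`. -/
lemma exists_passes_of_blocks {L : Fin n → Fin r} {a : Fin n → ZMod 2} {m : ℕ} {j : Fin n}
    {c : ZMod 2} (hmr : m ≤ r) (hpass : (L j : ℕ) < m → c = a j + 1)
    (hblock : m < r → ∃ u, (L u : ℕ) = m ∧ (u ≠ j ∨ c = a j)) :
    ∃ x, x j = c ∧ PassesLayersBelow L a m x ∧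
      nestVal (fun i => layerMon L a i x) r 0 = m := by
  set x := Function.update (fun u => if (L u : ℕ) < m then a u + 1 else a u) j c
  have hx : PassesLayersBelow L a m x := fun u hu => by
    by_cases huj : u = j
    · subst huj; simpa [x] using hpass hu
    · simp [x, huj, hu]
  refine ⟨x, by simp [x], hx, nestVal_layerMon_eq hmr hx fun h => ?_⟩
  obtain ⟨u, hu, hblock⟩ := hblock h
  refine ⟨u, hu, ?_⟩
  rcases hblock with huj | hc
  · simp [x, huj, hu]
  · by_cases huj : u = j
    · subst huj; simp [x, hc]
    · simp [x, huj, hu]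

lemma IsLayerAssignment.exists_passes {L : Fin n → Fin r} (hL : IsLayerAssignment L)
    (a : Fin n → ZMod 2) {m : ℕ} {j : Fin n} {c : ZMod 2} (hmr : m ≤ r)
    (hpass : (L j : ℕ) < m → c = a j + 1) :
    ∃ x, x j = c ∧ PassesLayersBelow L a m x ∧
      nestVal (fun i => layerMon L a i x) r 0 = m := by
  by_cases hblock : m < r → ∃ u, (L u : ℕ) = m ∧ (u ≠ j ∨ c = a j)
  · exact exists_passes_of_blocks hmr hpass hblock
  -- Otherwise layer `m` is `{j}` with `x j = c` passing, so we skip to the nest value `m + 2`.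
  push Not at hblock
  obtain ⟨hm, honly⟩ := hblock
  obtain ⟨u, hu⟩ := hL.exists_mem hm
  have hLj : (L j : ℕ) = m := by rwa [← (honly u hu).1]
  have hc : c = a j + 1 := zmod_two_eq_add_one_of_ne (honly j hLj).2
  have hm2 : m + 2 ≤ r := by
    have := hL.ne_last_of_subsingleton fun v hv => (honly v hv).1
    omega
  obtain ⟨x, hxj, hx, hval⟩ := exists_passes_of_blocks (m := m + 2) (j := j) (c := c) hm2
    (fun _ => hc) fun h => by
      obtain ⟨v, hv⟩ := hL.exists_mem h
      exact ⟨v, hv, Or.inl fun hvj => by rw [hvj] at hv; omega⟩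
  refine ⟨x, hxj, fun v hv => hx v (by omega), ?_⟩
  rw [hval, Nat.cast_add, show ((2 : ℕ) : ZMod 2) = 0 from rfl, add_zero]

variable {f : (Fin n → ZMod 2) → ZMod 2} {L L' : Fin n → Fin r} {a a' : Fin n → ZMod 2}
  {b b' : ZMod 2}

lemma IsLayerAssignment.isLayeredForm (hL : IsLayerAssignment L) (hn : 0 < n)
    (a : Fin n → ZMod 2) (b : ZMod 2) : IsLayeredForm (layeredFn L a b) L a b :=
  ⟨(L ⟨0, hn⟩).pos, hL.1, hL.2, fun _ => rfl⟩

lemma IsLayeredForm.isLayerAssignment (hf : IsLayeredForm f L a b) : IsLayerAssignment L :=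
  ⟨hf.2.1, hf.2.2.1⟩

lemma IsLayeredForm.canalizes_iff (hf : IsLayeredForm f L a b) {i : ℕ} (hi : i < r)
    {j : Fin n} (hj : i ≤ L j) {c d : ZMod 2} :
    (∀ x, PassesLayersBelow L a i x → x j = c → f x = d) ↔
      (L j : ℕ) = i ∧ c = a j ∧ d = b + i := by
  have hL := hf.isLayerAssignment
  constructor
  · intro hcan
    obtain ⟨x, hxj, hx, hval⟩ :=
      hL.exists_passes a hi.le (j := j) (c := c) fun h => absurd h (by omega)
    have hd : d = b + i := by rw [← hcan x hx hxj, hf.2.2.2 x, hval, add_comm]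
    have hlayer : (L j : ℕ) = i ∧ c = a j := by
      by_contra hne
      obtain ⟨y, hyj, hy, hval'⟩ := hL.exists_passes a (m := i + 1) hi (c := c) fun h =>
        zmod_two_eq_add_one_of_ne fun hc => hne ⟨by omega, hc⟩
      have hfy := hcan y (fun u hu => hy u (by omega)) hyj
      rw [hf.2.2.2 y, hval', hd] at hfy
      push_cast at hfy
      grind
    exact ⟨hlayer.1, hlayer.2, hd⟩
  · rintro ⟨hLj, rfl, rfl⟩ x hx hxj
    rw [hf.2.2.2 x, nestVal_layerMon_eq hi.le hx fun _ => ⟨j, hLj, hxj⟩, add_comm]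

lemma IsLayeredForm.eq_of_agree_below (hf : IsLayeredForm f L a b)
    (hf' : IsLayeredForm f L' a' b') {i : ℕ}
    (hagree : ∀ u, ((L u : ℕ) < i ∨ (L' u : ℕ) < i) → L u = L' u ∧ a u = a' u)
    {j : Fin n} (hj : (L j : ℕ) = i) : L' j = L j ∧ a' j = a j ∧ b' = b := by
  have hi : i < r := hj ▸ (L j).2
  have hj' : i ≤ L' j := by
    by_contra h
    have := congrArg Fin.val (hagree j (Or.inr (by omega))).1
    omega
  have hpass : ∀ x, PassesLayersBelow L' a' i x → PassesLayersBelow L a i x :=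
    fun x hx u hu => by
      obtain ⟨hLu, hau⟩ := hagree u (Or.inl hu)
      rw [hau]
      exact hx u (hLu ▸ hu)
  obtain ⟨hL'j, hc, hd⟩ := (hf'.canalizes_iff hi hj').mp fun x hx hxj =>
    (hf.canalizes_iff hi hj.ge).mpr ⟨hj, rfl, rfl⟩ x (hpass x hx) hxj
  exact ⟨Fin.ext (hL'j.trans hj.symm), hc.symm, add_right_cancel hd.symm⟩

theorem IsLayeredForm.unique (hf : IsLayeredForm f L a b) (hf' : IsLayeredForm f L' a' b') :
    L = L' ∧ a = a' ∧ b = b' := by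
  have hagree : ∀ i u, ((L u : ℕ) < i ∨ (L' u : ℕ) < i) → L u = L' u ∧ a u = a' u := by
    intro i
    induction i with
    | zero => simp
    | succ i ih =>
      intro u hu
      by_cases hlt : (L u : ℕ) < i ∨ (L' u : ℕ) < i
      · exact ih u hlt
      rcases (by omega : (L u : ℕ) = i ∨ (L' u : ℕ) = i) with h | h
      · obtain ⟨hL, ha, -⟩ := hf.eq_of_agree_below hf' ih h
        exact ⟨hL.symm, ha.symm⟩
      · obtain ⟨hL, ha, -⟩ :=
          hf'.eq_of_agree_below hf (fun v hv => (ih v hv.symm).imp Eq.symm Eq.symm) h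
        exact ⟨hL, ha⟩
  obtain ⟨j, hj⟩ := hf.isLayerAssignment.exists_mem hf.1
  exact ⟨funext fun u => (hagree r u (Or.inl (L u).2)).1,
    funext fun u => (hagree r u (Or.inl (L u).2)).2,
    (hf.eq_of_agree_below hf' (by simp) hj).2.2.symm⟩

lemma card_isLayerAssignment (hn : 0 < n) :
    #{L : Fin n → Fin r | IsLayerAssignment L} =
      ∑ k ∈ (Finset.Nat.antidiagonalTuple r n).filter
          (fun k => (∀ i, 1 ≤ k i) ∧ ∀ i : Fin r, (i : ℕ) = r - 1 → 2 ≤ k i),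
        Nat.multinomial univ k := by
  refine (card_eq_sum_card_fiberwise (f := fun L (i : Fin r) => layerSize L i)
    fun L hL => ?_).trans (sum_congr rfl fun k hk => ?_)
  · have hL := (mem_filter.mp hL).2
    rw [mem_coe, mem_filter, Finset.Nat.mem_antidiagonalTuple]
    refine ⟨?_, hL.1, fun i hi => ?_⟩
    · simp only [layerSize_coe]
      rw [← card_eq_sum_card_fiberwise fun _ _ => mem_univ _, card_univ, Fintype.card_fin]
    · change 2 ≤ layerSize L i
      rw [hi]
      exact hL.2
  rw [mem_filter, Finset.Nat.mem_antidiagonalTuple] at hk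
  rw [← card_filter_card_fiber_eq_multinomial k (by rw [hk.1, Fintype.card_fin])]
  congr 1
  ext L
  simp only [mem_filter, mem_univ, true_and]
  constructor
  · rintro ⟨-, rfl⟩ i
    exact (layerSize_coe L i).symm
  · intro h
    have hsize (i : Fin r) : layerSize L i = k i := (layerSize_coe L i).trans (h i)
    have hr : r - 1 < r := Nat.sub_one_lt_of_lt (L ⟨0, hn⟩).pos
    refine ⟨⟨fun i => hsize i ▸ hk.2.1 i, ?_⟩, funext hsize⟩
    exact hsize ⟨r - 1, hr⟩ ▸ hk.2.2 ⟨r - 1, hr⟩ rfl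

lemma card_isLayeredForm (hn : 0 < n) :
    Nat.card {f : (Fin n → ZMod 2) → ZMod 2 //
        ∃ (L : Fin n → Fin r) (a : Fin n → ZMod 2) (b : ZMod 2), IsLayeredForm f L a b} =
      #{L : Fin n → Fin r | IsLayerAssignment L} * 2 ^ n * 2 := by
  classical
  set S : Finset ((Fin n → Fin r) × (Fin n → ZMod 2) × ZMod 2) :=
    univ.filter IsLayerAssignment ×ˢ univ ×ˢ univ
  set F : (Fin n → Fin r) × (Fin n → ZMod 2) × ZMod 2 → (Fin n → ZMod 2) → ZMod 2 :=
    fun p => layeredFn p.1 p.2.1 p.2.2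
  have hrange : ({f | ∃ (L : Fin n → Fin r) (a : Fin n → ZMod 2) (b : ZMod 2),
      IsLayeredForm f L a b} : Finset ((Fin n → ZMod 2) → ZMod 2)) = S.image F := by
    ext f
    simp only [mem_filter, mem_univ, true_and, and_true, mem_image, mem_product, S, F, Prod.exists]
    constructor
    · rintro ⟨L, a, b, hf⟩
      exact ⟨L, a, b, hf.isLayerAssignment, funext fun x => (hf.2.2.2 x).symm⟩
    · rintro ⟨L, a, b, hL, rfl⟩
      exact ⟨L, a, b, hL.isLayeredForm hn a b⟩
  have hinj : Set.InjOn F S := by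
    rintro ⟨L, a, b⟩ hp ⟨L', a', b'⟩ hp' he
    have hL : IsLayerAssignment L := (mem_filter.mp (mem_product.mp hp).1).2
    have hL' : IsLayerAssignment L' := (mem_filter.mp (mem_product.mp hp').1).2
    have he : layeredFn L a b = layeredFn L' a' b' := he
    obtain ⟨rfl, rfl, rfl⟩ :=
      (hL.isLayeredForm hn a b).unique (he ▸ hL'.isLayeredForm hn a' b')
    rfl
  rw [Nat.card_eq_fintype_card, Fintype.card_subtype, hrange, card_image_of_injOn hinj,
    card_product, card_product]
  simp [mul_assoc]

end Layers

/-- The number of nested canalizing functions in `n` essential variables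
(n ≥ 2) with layer number `r` is
`2^{n+1} · Σ n!/(k₁!⋯k_r!)`, the sum being over all tuples of positive
integers `(k₁,…,k_r)` with `k₁ + ⋯ + k_r = n` and `k_r ≥ 2`. -/
theorem statement8 (n r : ℕ) (hn : 2 ≤ n) :
    Nat.card {f : (Fin n → ZMod 2) → ZMod 2 //
        ∃ (L : Fin n → Fin r) (a : Fin n → ZMod 2) (b : ZMod 2),
          IsLayeredForm f L a b} =
      2 ^ (n + 1) *
        ∑ k ∈ (Finset.Nat.antidiagonalTuple r n).filter
            (fun k => (∀ i, 1 ≤ k i) ∧ ∀ i : Fin r, (i : ℕ) = r - 1 → 2 ≤ k i),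
          Nat.multinomial Finset.univ k := by
  rw [card_isLayeredForm (by omega), card_isLayerAssignment (by omega), pow_succ]
  ring
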